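/- arXiv:2504.20318 — 2 statements merged into one kernel-verified Lean document; each statement's English description precedes it below -/
import Mathlib

section
/- Completeness of partial-space search: if π = a₁,…,aₘ is a valid plan for a planning task Π, then there exists a sequence of partial-space search nodes starting at the root ⟨s₀,⊥⟩, in which each node is a successor of the previous one, ending at a node ⟨s,⊥⟩ with G ⊆ s, and such that the fully instantiated partial actions appearing along the sequence, taken in order, are exactly a₁,…,aₘ. -/
namespace PS

/-- A lifted planning task: atoms, action schemas with arities, objects,
preconditions/add/delete effects of ground instantiations, initial state and goal. -/
structure LiftedTask where
  Atom : Type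
  Schema : Type
  Obj : Type
  arity : Schema → ℕ
  pre : Schema → List Obj → Set Atom
  add : Schema → List Obj → Set Atom
  del : Schema → List Obj → Set Atom
  init : Set Atom
  goal : Set Atom

/-- A ground action: a schema with a full list of instantiating objects. -/
abbrev GroundAction (T : LiftedTask) :=
  { p : T.Schema × List T.Obj // p.2.length = T.arity p.1 }

/-- A partial action: `none` is ⊥; otherwise a schema with a prefix of instantiating objects. -/
abbrev PartialAction (T : LiftedTask) :=
  Option { p : T.Schema × List T.Obj // p.2.length ≤ T.arity p.1 }

/-- `a` is applicable in state `s` iff `pre(a) ⊆ s`. -/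
def Applicable (T : LiftedTask) (a : GroundAction T) (s : Set T.Atom) : Prop :=
  T.pre a.val.1 a.val.2 ⊆ s

/-- `succ(s,a) = (s \ del(a)) ∪ add(a)`. -/
def applySucc (T : LiftedTask) (s : Set T.Atom) (a : GroundAction T) : Set T.Atom :=
  (s \ T.del a.val.1 a.val.2) ∪ T.add a.val.1 a.val.2

/-- A ground action viewed as a (fully instantiated) partial action. -/
def toPartial (T : LiftedTask) (a : GroundAction T) : PartialAction T :=
  some ⟨a.val, le_of_eq a.prop⟩

/-- A partial action is fully instantiated iff all schema parameters are instantiated. -/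
def isFull (T : LiftedTask) : PartialAction T → Prop
  | none => False
  | some p => p.val.2.length = T.arity p.val.1

/-- `𝒜^ρ`: the set of ground actions in the subtree rooted at `ρ` of the partial action tree. -/
def subtree (T : LiftedTask) : PartialAction T → Set (GroundAction T)
  | none => Set.univ
  | some p => {a : GroundAction T | a.val.1 = p.val.1 ∧ p.val.2 <+: a.val.2}

/-- `ρ` is applicable in `s` iff `𝒜^ρ_s = 𝒜^ρ ∩ 𝒜_s ≠ ∅`. -/
def ApplicableP (T : LiftedTask) (ρ : PartialAction T) (s : Set T.Atom) : Prop :=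
  ∃ a ∈ subtree T ρ, Applicable T a s

/-- The child relation of the partial action tree. -/
def Child (T : LiftedTask) : PartialAction T → PartialAction T → Prop
  | none, some p' => p'.val.2 = []
  | some p, some p' => p.val.1 = p'.val.1 ∧ ∃ o : T.Obj, p'.val.2 = p.val.2 ++ [o]
  | _, none => False

/-- A partial-space search node: a state and a partial action. -/
abbrev Node (T : LiftedTask) := Set T.Atom × PartialAction T

/-- The successor relation of partial-space search. -/
inductive Succ (T : LiftedTask) : Node T → Node T → Prop
  | refine {s : Set T.Atom} {ρ ρ' : PartialAction T} :
      Child T ρ ρ' → ApplicableP T ρ' s → Succ T (s, ρ) (s, ρ')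
  | finish {s : Set T.Atom} (a : GroundAction T) :
      Succ T (s, toPartial T a) (applySucc T s a, (none : PartialAction T))

/-- `IsPlanFrom T s π`: `π` is a valid plan starting from state `s`. -/
inductive IsPlanFrom (T : LiftedTask) : Set T.Atom → List (GroundAction T) → Prop
  | nil {s : Set T.Atom} : T.goal ⊆ s → IsPlanFrom T s []
  | cons {s : Set T.Atom} {a : GroundAction T} {l : List (GroundAction T)} :
      Applicable T a s → IsPlanFrom T (applySucc T s a) l → IsPlanFrom T s (a :: l)

/-- The ground action corresponding to a fully instantiated partial action, if any. -/
def groundOf? (T : LiftedTask) : PartialAction T → Option (GroundAction T)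
  | none => none
  | some p => if h : p.val.2.length = T.arity p.val.1 then some ⟨p.val, h⟩ else none

/-- The ordered subsequence of fully instantiated partial actions in a node sequence. -/
def extractPlan (T : LiftedTask) (l : List (Node T)) : List (GroundAction T) :=
  l.filterMap fun n => groundOf? T n.2

/-- The partial action instantiating the first `j` parameters of the ground action `a`. -/
def prefixPA (T : LiftedTask) (a : GroundAction T) (j : ℕ) : PartialAction T :=
  some ⟨(a.val.1, a.val.2.take j), by
    rw [List.length_take]
    exact (min_le_right _ _).trans a.prop.le⟩

/-- The parent map of the partial action tree (sends ⊥ to ⊥). -/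
def parentPA (T : LiftedTask) : PartialAction T → PartialAction T
  | none => none
  | some p =>
      if p.val.2.isEmpty then none
      else some ⟨(p.val.1, p.val.2.dropLast), by
        rw [List.length_dropLast]
        exact (Nat.sub_le _ _).trans p.prop⟩

/-- Specificity: `0` for ⊥, `j+1` for a partial action with `j` instantiated parameters. -/
def spec (T : LiftedTask) : PartialAction T → ℕ
  | none => 0
  | some p => p.val.2.length + 1

/-- The canonical root-to-goal path obtained by decomposing each plan action into its
chain of partial actions of increasing specificity. -/
def planPath (T : LiftedTask) : Set T.Atom → List (GroundAction T) → List (Node T)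
  | s, [] => [(s, (none : PartialAction T))]
  | s, a :: π =>
      ((s, (none : PartialAction T)) ::
        (List.range (T.arity a.val.1 + 1)).map fun j => (s, prefixPA T a j)) ++
        planPath T (applySucc T s a) π

/-- `ρ` lies on the unique chain from ⊥ to the ground action `a` in the partial action tree. -/
def OnChain (T : LiftedTask) (ρ : PartialAction T) (a : GroundAction T) : Prop :=
  ρ = none ∨ ∃ j ≤ T.arity a.val.1, ρ = prefixPA T a j

/-!
To realise a plan in partial-space search, descend the partial action tree along the prefixes of
each plan action `a`: every prefix is applicable in the current state `s` because `a` itself lies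
below it and is applicable, and once `a` is fully instantiated the search moves to `⟨succ(s,a),⊥⟩`.
Only the last node of each descent is fully instantiated, so the plan is read back from the path.
-/

section PrefixChain

variable {T : LiftedTask} (a : GroundAction T)

lemma prefixPA_arity : prefixPA T a (T.arity a.val.1) = toPartial T a := by
  simp only [prefixPA, toPartial, List.take_of_length_le a.prop.le]

lemma child_none_prefixPA_zero : Child T none (prefixPA T a 0) :=
  List.take_zero (l := a.val.2)

lemma child_prefixPA_succ {j : ℕ} (hj : j < T.arity a.val.1) :
    Child T (prefixPA T a j) (prefixPA T a (j + 1)) :=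
  ⟨rfl, a.val.2[j]'(a.prop ▸ hj), (List.take_concat_get' _ _ (a.prop ▸ hj)).symm⟩

lemma applicableP_prefixPA {s : Set T.Atom} (h : Applicable T a s) (j : ℕ) :
    ApplicableP T (prefixPA T a j) s :=
  ⟨a, ⟨rfl, List.take_prefix j _⟩, h⟩

lemma groundOf?_prefixPA_of_lt {j : ℕ} (hj : j < T.arity a.val.1) :
    groundOf? T (prefixPA T a j) = none := by
  have hlen : (a.val.2.take j).length = j := List.length_take_of_le (a.prop ▸ hj.le)
  simp only [groundOf?, prefixPA, hlen, hj.ne, dite_false]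

lemma groundOf?_toPartial : groundOf? T (toPartial T a) = some a :=
  dif_pos a.prop

end PrefixChain

def descent (T : LiftedTask) (s : Set T.Atom) (a : GroundAction T) : List (Node T) :=
  (s, none) :: (List.range (T.arity a.val.1 + 1)).map fun j => (s, prefixPA T a j)

section Descent

variable {T : LiftedTask} (s : Set T.Atom) (a : GroundAction T)

lemma planPath_cons (π : List (GroundAction T)) :
    planPath T s (a :: π) = descent T s a ++ planPath T (applySucc T s a) π :=
  rfl

lemma isChain_descent (h : Applicable T a s) : List.IsChain (Succ T) (descent T s a) := by
  rw [descent, List.isChain_cons, List.isChain_map, List.isChain_range_succ]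
  refine ⟨?_, fun j hj => .refine (child_prefixPA_succ a hj) (applicableP_prefixPA a h _)⟩
  rintro _ hy
  simp only [List.head?_map, List.range_succ_eq_map, List.head?_cons, Option.map_some,
    Option.mem_def, Option.some.injEq] at hy
  exact hy ▸ .refine (child_none_prefixPA_zero a) (applicableP_prefixPA a h 0)

lemma getLast?_descent : (descent T s a).getLast? = some (s, toPartial T a) := by
  rw [descent, List.range_succ, List.map_append, ← List.cons_append]
  simp only [List.map_cons, List.map_nil, List.getLast?_concat, prefixPA_arity]

lemma extractPlan_append (l₁ l₂ : List (Node T)) :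
    extractPlan T (l₁ ++ l₂) = extractPlan T l₁ ++ extractPlan T l₂ :=
  List.filterMap_append

lemma extractPlan_descent : extractPlan T (descent T s a) = [a] := by
  rw [descent, List.range_succ, List.map_append, ← List.cons_append, extractPlan_append]
  have hprefixes : extractPlan T ((s, none) ::
      (List.range (T.arity a.val.1)).map fun j => (s, prefixPA T a j)) = [] := by
    simp only [extractPlan, List.filterMap_eq_nil_iff, List.mem_cons, List.mem_map,
      List.mem_range]
    rintro _ (rfl | ⟨j, hj, rfl⟩)
    · rfl
    · exact groundOf?_prefixPA_of_lt a hj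
  rw [hprefixes, List.nil_append]
  simp only [List.map_cons, List.map_nil, extractPlan, List.filterMap_cons, prefixPA_arity,
    groundOf?_toPartial, List.filterMap_nil]

end Descent

section PlanPath

variable {T : LiftedTask}

lemma planPath_ne_nil (s : Set T.Atom) (π : List (GroundAction T)) : planPath T s π ≠ [] := by
  cases π <;> simp [planPath]

lemma head?_planPath (s : Set T.Atom) (π : List (GroundAction T)) :
    (planPath T s π).head? = some (s, none) := by
  cases π <;> simp [planPath]

lemma getLast_planPath (s : Set T.Atom) (π : List (GroundAction T)) :
    (planPath T s π).getLast (planPath_ne_nil s π) = (π.foldl (applySucc T) s, none) := by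
  induction π generalizing s with
  | nil => rfl
  | cons a π ih =>
    simp only [planPath_cons, List.getLast_append_right (planPath_ne_nil _ π), ih,
      List.foldl_cons]

lemma extractPlan_planPath (s : Set T.Atom) (π : List (GroundAction T)) :
    extractPlan T (planPath T s π) = π := by
  induction π generalizing s with
  | nil => rfl
  | cons a π ih => rw [planPath_cons, extractPlan_append, extractPlan_descent, ih]; rfl

lemma IsPlanFrom.isChain_planPath {s : Set T.Atom} {π : List (GroundAction T)}
    (h : IsPlanFrom T s π) : List.IsChain (Succ T) (planPath T s π) := by
  induction h with
  | nil => exact List.isChain_singleton _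
  | @cons s a π happ _ ih =>
    refine (isChain_descent s a happ).append ih fun x hx y hy => ?_
    rw [getLast?_descent, Option.mem_some_iff] at hx
    rw [head?_planPath, Option.mem_some_iff] at hy
    exact hx ▸ hy ▸ .finish a

lemma IsPlanFrom.goal_subset_foldl {s : Set T.Atom} {π : List (GroundAction T)}
    (h : IsPlanFrom T s π) : T.goal ⊆ π.foldl (applySucc T) s := by
  induction h with
  | nil hgoal => exact hgoal
  | cons _ _ ih => exact ih

end PlanPath

/-- **Completeness of partial-space search** (Theorem 1, completeness part). -/
theorem partial_space_search_complete (T : LiftedTask) (π : List (GroundAction T))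
    (hπ : IsPlanFrom T T.init π) :
    ∃ (ns : List (Node T)) (hne : ns ≠ []),
      List.Chain' (Succ T) ns ∧
      ns.head hne = (T.init, (none : PartialAction T)) ∧
      (ns.getLast hne).2 = (none : PartialAction T) ∧
      T.goal ⊆ (ns.getLast hne).1 ∧
      extractPlan T ns = π := by
  refine ⟨planPath T T.init π, planPath_ne_nil _ π, hπ.isChain_planPath, ?_, ?_, ?_,
    extractPlan_planPath _ π⟩
  · exact Option.some.inj ((List.head?_eq_some_head _).symm.trans (head?_planPath _ π))
  · rw [getLast_planPath]
  · rw [getLast_planPath]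
    exact hπ.goal_subset_foldl

end PS
end

section
/- Partial-space search refines state-space transitions: let ⟨s,⊥⟩ = n₀, n₁, …, n_ℓ = ⟨s',⊥⟩ be a sequence of partial-space search nodes in which each node is a successor of the previous one, ℓ ≥ 1, and no intermediate node n₁,…,n_{ℓ−1} has partial action ⊥. Then there is exactly one index i with n_i = ⟨s,a⟩ for a fully instantiated partial action (ground action) a; this a is applicable in s, s' = succ(s,a), all intermediate nodes have state s, and ℓ = k + 2 where k is the number of parameters of the schema of a. -/
namespace PS

/-!
A ⊥ node can only be entered by executing a ground action, and any other node only by a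
refinement step, which keeps the state and instantiates one more parameter. Hence the last step
executes the partial action at position `ℓ - 1`, which is a ground action `a`, and along the
refinements before it the state stays `s` while position `i` carries `i - 1` parameters, so
`ℓ - 1 = k + 1`. A fully instantiated partial action has no children, so no earlier node is full.
-/

section PartialActionTree

variable {T : LiftedTask}

lemma not_child_none (ρ : PartialAction T) : ¬ Child T ρ none := by
  cases ρ <;> exact id

lemma spec_of_child {ρ ρ' : PartialAction T} (h : Child T ρ ρ') :
    spec T ρ' = spec T ρ + 1 := by
  match ρ, ρ', h with
  | none, some p', (h : p'.val.2 = []) => simp [spec, h]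
  | some p, some p', ⟨_, o, ho⟩ => simp [spec, ho]

-- A child has one more parameter instantiated than a full partial action can carry.
lemma not_child_of_isFull {ρ ρ' : PartialAction T} (hρ : isFull T ρ) : ¬ Child T ρ ρ' := by
  rcases ρ with _ | p
  · exact hρ.elim
  rcases ρ' with _ | p'
  · exact not_child_none _
  rintro ⟨hschema, o, ho⟩
  have hlen := p'.prop
  rw [ho, ← hschema, List.length_append, show p.val.2.length = _ from hρ] at hlen
  simp at hlen

lemma isFull_toPartial (a : GroundAction T) : isFull T (toPartial T a) := a.prop

lemma spec_toPartial (a : GroundAction T) : spec T (toPartial T a) = T.arity a.val.1 + 1 := by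
  simp [spec, toPartial, a.prop]

lemma applicable_of_applicableP_toPartial {a : GroundAction T} {s : Set T.Atom}
    (h : ApplicableP T (toPartial T a) s) : Applicable T a s := by
  obtain ⟨b, ⟨hschema, hprefix⟩, hb⟩ := h
  have hlen : a.val.2.length = b.val.2.length := by rw [a.prop, b.prop, hschema]
  have hab : b = a := Subtype.ext (Prod.ext hschema (hprefix.eq_of_length hlen).symm)
  rwa [hab] at hb

end PartialActionTree

namespace Succ

variable {T : LiftedTask} {n n' : Node T}

lemma of_snd_ne_none (h : Succ T n n') (hne : n'.2 ≠ none) :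
    n'.1 = n.1 ∧ Child T n.2 n'.2 ∧ ApplicableP T n'.2 n'.1 := by
  cases h with
  | refine hc ha => exact ⟨rfl, hc, ha⟩
  | finish a => exact absurd rfl hne

lemma of_snd_eq_none (h : Succ T n n') (hnone : n'.2 = none) :
    ∃ a : GroundAction T, n.2 = toPartial T a ∧ n'.1 = applySucc T n.1 a := by
  cases h with
  | @refine _ _ ρ' hc _ =>
    obtain rfl : ρ' = none := hnone
    exact absurd hc (not_child_none _)
  | finish a => exact ⟨a, rfl, rfl⟩

lemma snd_eq_none_of_isFull (h : Succ T n n') (hfull : isFull T n.2) : n'.2 = none := by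
  by_contra hne
  exact not_child_of_isFull hfull (h.of_snd_ne_none hne).2.1

end Succ

lemma fst_eq_and_spec_eq_of_refinements {T : LiftedTask} {ns : ℕ → Node T} {m : ℕ}
    {s : Set T.Atom} (h0 : ns 0 = (s, (none : PartialAction T)))
    (hchain : ∀ i < m, Succ T (ns i) (ns (i + 1)))
    (hne : ∀ i, 0 < i → i ≤ m → (ns i).2 ≠ none) :
    ∀ i ≤ m, (ns i).1 = s ∧ spec T (ns i).2 = i := by
  intro i
  induction i with
  | zero => simp [h0, spec]
  | succ i ih =>
    intro hi
    obtain ⟨hs, hspec⟩ := ih (by omega)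
    obtain ⟨hstate, hchild, -⟩ :=
      (hchain i (by omega)).of_snd_ne_none (hne (i + 1) (by omega) hi)
    exact ⟨hstate.trans hs, by rw [spec_of_child hchild, hspec]⟩

/-- **Partial-space search refines state-space transitions**: along a successor sequence
from `⟨s,⊥⟩` to `⟨s',⊥⟩` with no intermediate ⊥ node, there is exactly one fully
instantiated node, it equals `⟨s,a⟩` for a ground action `a` applicable in `s`,
`s' = succ(s,a)`, all intermediate nodes carry state `s`, and `ℓ = k + 2` where `k` is the
number of parameters of the schema of `a`. -/
theorem refines_state_transition (T : LiftedTask) (ns : ℕ → Node T) (ℓ : ℕ)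
    (s s' : Set T.Atom) (hℓ : 1 ≤ ℓ)
    (hchain : ∀ i < ℓ, Succ T (ns i) (ns (i + 1)))
    (h0 : ns 0 = (s, (none : PartialAction T)))
    (hl : ns ℓ = (s', (none : PartialAction T)))
    (hmid : ∀ i, 0 < i → i < ℓ → (ns i).2 ≠ none) :
    ∃ a : GroundAction T,
      (∃! i : ℕ, i ≤ ℓ ∧ isFull T (ns i).2) ∧
      (∀ i ≤ ℓ, isFull T (ns i).2 → ns i = (s, toPartial T a)) ∧
      Applicable T a s ∧
      s' = applySucc T s a ∧
      (∀ i < ℓ, (ns i).1 = s) ∧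
      ℓ = T.arity a.val.1 + 2 := by
  obtain ⟨k, rfl⟩ : ∃ k, ℓ = k + 1 := ⟨ℓ - 1, by omega⟩
  obtain ⟨a, ha, hs'⟩ := (hchain k k.lt_succ_self).of_snd_eq_none (by rw [hl])
  have hrun := fst_eq_and_spec_eq_of_refinements (m := k) h0 (fun i hi => hchain i (by omega))
    (fun i hi hik => hmid i hi (by omega))
  have hk : k = T.arity a.val.1 + 1 := by
    rw [← (hrun k le_rfl).2, ha, spec_toPartial]
  have hnode : ns k = (s, toPartial T a) := Prod.ext (hrun k le_rfl).1 ha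
  have hfull_only : ∀ i ≤ k + 1, isFull T (ns i).2 → i = k := by
    intro i hi hfull
    obtain hik | rfl | hik := lt_trichotomy i k
    · exact absurd ((hchain i (by omega)).snd_eq_none_of_isFull hfull)
        (hmid (i + 1) (by omega) (by omega))
    · rfl
    · obtain rfl : i = k + 1 := by omega
      simp [hl, isFull] at hfull
  have happ : Applicable T a s := by
    have hstep := hchain (k - 1) (by omega)
    rw [Nat.sub_add_cancel (by omega), hnode] at hstep
    obtain ⟨-, -, happP⟩ := hstep.of_snd_ne_none (Option.some_ne_none _)
    exact applicable_of_applicableP_toPartial happP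
  refine ⟨a, ⟨k, ⟨by omega, hnode ▸ isFull_toPartial a⟩, fun i hi => hfull_only i hi.1 hi.2⟩,
    fun i hi hfull => hfull_only i hi hfull ▸ hnode, happ, ?_, fun i hi => (hrun i (by omega)).1,
    by omega⟩
  rw [hl, (hrun k le_rfl).1] at hs'
  exact hs'

end PS
end
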